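/- If X is a finite set of formulas, φ a formula, and a₁,…,aₙ are all atomic programs occurring in X ∪ {φ}, then X globally entails φ (φ is valid in every standard dynamic Odintsov–Wansing model in which all members of X are valid) if and only if the formula [(a₁ ∪ … ∪ aₙ)*](⋀X) → φ is valid in all standard dynamic Odintsov–Wansing models. -/

import Mathlib

mutual
inductive DynProg : Type where
  | atom : ℕ → DynProg
  | seq : DynProg → DynProg → DynProg
  | union : DynProg → DynProg → DynProg
  | star : DynProg → DynProg
  | test : DynForm → DynProg
inductive DynForm : Type where
  | atom : ℕ → DynForm
  | bot  : DynForm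
  | snot : DynForm → DynForm
  | and  : DynForm → DynForm → DynForm
  | or   : DynForm → DynForm → DynForm
  | imp  : DynForm → DynForm → DynForm
  | box  : DynProg → DynForm → DynForm
  | dia  : DynProg → DynForm → DynForm
end

def DynForm.neg (φ : DynForm) : DynForm := .imp φ .bot

def DynForm.biimp (φ ψ : DynForm) : DynForm := .and (.imp φ ψ) (.imp ψ φ)

structure DynModel : Type 1 where
  S : Type
  ne : Nonempty S
  Ra : ℕ → S → S → Prop
  Vp : ℕ → S → Prop
  Vm : ℕ → S → Prop

mutual
def progRel (M : DynModel) : DynProg → M.S → M.S → Prop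
  | .atom a, x, y => M.Ra a x y
  | .seq α β, x, z => ∃ y, progRel M α x y ∧ progRel M β y z
  | .union α β, x, y => progRel M α x y ∨ progRel M β x y
  | .star α, x, y => Relation.ReflTransGen (fun u v => progRel M α u v) x y
  | .test φ, x, y => x = y ∧ dverify M x φ
def dverify (M : DynModel) : M.S → DynForm → Prop
  | x, .atom p => M.Vp p x
  | _, .bot => False
  | x, .snot φ => dfalsify M x φ
  | x, .and φ ψ => dverify M x φ ∧ dverify M x ψ
  | x, .or φ ψ => dverify M x φ ∨ dverify M x ψ
  | x, .imp φ ψ => dverify M x φ → dverify M x ψ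
  | x, .box α φ => ∀ y, progRel M α x y → dverify M y φ
  | x, .dia α φ => ∃ y, progRel M α x y ∧ dverify M y φ
def dfalsify (M : DynModel) : M.S → DynForm → Prop
  | x, .atom p => M.Vm p x
  | _, .bot => True
  | x, .snot φ => dverify M x φ
  | x, .and φ ψ => dfalsify M x φ ∨ dfalsify M x ψ
  | x, .or φ ψ => dfalsify M x φ ∧ dfalsify M x ψ
  | x, .imp φ ψ => dverify M x φ ∧ dfalsify M x ψ
  | x, .box α φ => ∃ y, progRel M α x y ∧ dfalsify M y φ
  | x, .dia α φ => ∀ y, progRel M α x y → dfalsify M y φ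
end

def validIn (M : DynModel) (φ : DynForm) : Prop := ∀ x : M.S, dverify M x φ

def DynValid (φ : DynForm) : Prop := ∀ M : DynModel, validIn M φ

mutual
def progAtoms : DynProg → Finset ℕ
  | .atom a => {a}
  | .seq α β => progAtoms α ∪ progAtoms β
  | .union α β => progAtoms α ∪ progAtoms β
  | .star α => progAtoms α
  | .test φ => formAtoms φ
def formAtoms : DynForm → Finset ℕ
  | .atom _ => ∅
  | .bot => ∅
  | .snot φ => formAtoms φ
  | .and φ ψ => formAtoms φ ∪ formAtoms ψ
  | .or φ ψ => formAtoms φ ∪ formAtoms ψ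
  | .imp φ ψ => formAtoms φ ∪ formAtoms ψ
  | .box α φ => progAtoms α ∪ formAtoms φ
  | .dia α φ => progAtoms α ∪ formAtoms φ
end

/-- the program a₁ ∪ … ∪ aₙ for a nonempty list a :: rest of atomic programs -/
def unionList (a : ℕ) (rest : List ℕ) : DynProg :=
  rest.foldl (fun p b => .union p (.atom b)) (.atom a)

def conjList : List DynForm → DynForm
  | [] => DynForm.neg .bot
  | ψ :: rest => .and ψ (conjList rest)

/-!
For the nontrivial direction, let `x` falsify `[(a₁ ∪ … ∪ aₙ)*](⋀X) → φ` and restrict the model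
to the states reachable from `x` along `a₁, …, aₙ`. All members of `X` are valid in this submodel.
The submodel is closed under every atomic program occurring in `X` or `φ`, so a simultaneous
induction on programs and formulas shows that restricting changes neither program relations nor
verification or falsification of such formulas; hence `φ` still fails at `x`.
-/

namespace Relation

variable {α : Type*} {r : α → α → Prop} {s : Set α}

theorem ReflTransGen.mem_of_closed (hs : ∀ ⦃a b⦄, a ∈ s → r a b → b ∈ s) {a b : α}
    (ha : a ∈ s) (h : ReflTransGen r a b) : b ∈ s := by
  induction h with
  | refl => exact ha
  | tail _ hbc hb => exact hs hb hbc

theorem reflTransGen_subtype_iff (hs : ∀ ⦃a b⦄, a ∈ s → r a b → b ∈ s) {a b : s} :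
    ReflTransGen (fun u v : s => r u v) a b ↔ ReflTransGen r a b := by
  refine ⟨fun h => ReflTransGen.lift Subtype.val (fun _ _ h => h) _ _ h, fun h => ?_⟩
  suffices ∀ c, ReflTransGen r a c →
      ∃ hc : c ∈ s, ReflTransGen (fun u v : s => r u v) a ⟨c, hc⟩ from (this b h).2
  intro c hac
  induction hac with
  | refl => exact ⟨a.2, .refl⟩
  | tail _ hcd ih =>
    obtain ⟨hc, h⟩ := ih
    exact ⟨hs hc hcd, h.tail hcd⟩

end Relation

theorem progRel_unionList (M : DynModel) (a : ℕ) (rest : List ℕ) (u v : M.S) :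
    progRel M (unionList a rest) u v ↔ ∃ b ∈ a :: rest, M.Ra b u v := by
  suffices ∀ (rest : List ℕ) (p : DynProg),
      progRel M (rest.foldl (fun p b => .union p (.atom b)) p) u v ↔
        progRel M p u v ∨ ∃ b ∈ rest, M.Ra b u v by
    simpa [unionList, progRel] using this rest (.atom a)
  intro rest
  induction rest with
  | nil => simp
  | cons b rest ih =>
    intro p
    simp only [List.foldl_cons, ih, progRel, List.exists_mem_cons_iff, or_assoc]

theorem dverify_conjList (M : DynModel) (y : M.S) (X : List DynForm) :
    dverify M y (conjList X) ↔ ∀ ψ ∈ X, dverify M y ψ := by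
  induction X with
  | nil => simp [conjList, DynForm.neg, dverify]
  | cons ψ X ih => simp [conjList, dverify, ih]

namespace DynModel

def IsClosedUnder (M : DynModel) (A : Set ℕ) (s : Set M.S) : Prop :=
  ∀ b ∈ A, ∀ ⦃y z⦄, y ∈ s → M.Ra b y z → z ∈ s

def restrict (M : DynModel) (s : Set M.S) (hs : s.Nonempty) : DynModel where
  S := s
  ne := hs.to_subtype
  Ra b y z := M.Ra b y z
  Vp p y := M.Vp p y
  Vm p y := M.Vm p y

variable {M : DynModel} {A : Set ℕ} {s : Set M.S}

theorem IsClosedUnder.progRel_mem (hA : M.IsClosedUnder A s) :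
    ∀ (α : DynProg), (progAtoms α : Set ℕ) ⊆ A → ∀ ⦃y z⦄, y ∈ s → progRel M α y z → z ∈ s
  | .atom b, h, _, _, hy, hr => hA b (h (by simp [progAtoms])) hy hr
  | .seq α β, h, _, _, hy, ⟨_, hr₁, hr₂⟩ => by
    simp only [progAtoms, Finset.coe_union, Set.union_subset_iff] at h
    exact hA.progRel_mem β h.2 (hA.progRel_mem α h.1 hy hr₁) hr₂
  | .union α β, h, _, _, hy, hr => by
    simp only [progAtoms, Finset.coe_union, Set.union_subset_iff] at h
    exact hr.elim (hA.progRel_mem α h.1 hy) (hA.progRel_mem β h.2 hy)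
  | .star α, h, _, _, hy, hr =>
    Relation.ReflTransGen.mem_of_closed (hA.progRel_mem α h) hy hr
  | .test _, _, _, _, hy, hr => hr.1 ▸ hy

theorem exists_restrict_iff (hs : s.Nonempty) {P : M.S → Prop} (hP : ∀ z, P z → z ∈ s) :
    (∃ z, P z) ↔ ∃ z : (M.restrict s hs).S, P z.1 :=
  ⟨fun ⟨z, hz⟩ => ⟨⟨z, hP z hz⟩, hz⟩, fun ⟨z, hz⟩ => ⟨z.1, hz⟩⟩

theorem forall_restrict_iff (hs : s.Nonempty) {P Q : M.S → Prop} (hP : ∀ z, P z → z ∈ s) :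
    (∀ z, P z → Q z) ↔ ∀ z : (M.restrict s hs).S, P z.1 → Q z.1 :=
  ⟨fun h z hz => h z.1 hz, fun h z hz => h ⟨z, hP z hz⟩ hz⟩

mutual

theorem progRel_restrict (hs : s.Nonempty) (hA : M.IsClosedUnder A s) :
    ∀ (α : DynProg), (progAtoms α : Set ℕ) ⊆ A → ∀ y z : (M.restrict s hs).S,
      (progRel (M.restrict s hs) α y z ↔ progRel M α y.1 z.1)
  | .atom _, _, _, _ => Iff.rfl
  | .seq α β, h, y, z => by
    simp only [progRel, progAtoms, Finset.coe_union, Set.union_subset_iff] at h ⊢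
    rw [exists_restrict_iff hs fun w hw => hA.progRel_mem α h.1 y.2 hw.1]
    simp only [progRel_restrict hs hA α h.1, progRel_restrict hs hA β h.2]
  | .union α β, h, y, z => by
    simp only [progAtoms, Finset.coe_union, Set.union_subset_iff] at h
    exact or_congr (progRel_restrict hs hA α h.1 y z) (progRel_restrict hs hA β h.2 y z)
  | .star α, h, y, z => by
    simp only [progRel, progRel_restrict hs hA α h]
    exact Relation.reflTransGen_subtype_iff (hA.progRel_mem α h)
  | .test ψ, h, y, z => and_congr Subtype.ext_iff (dverify_restrict hs hA ψ h y)

theorem dverify_restrict (hs : s.Nonempty) (hA : M.IsClosedUnder A s) :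
    ∀ (φ : DynForm), (formAtoms φ : Set ℕ) ⊆ A → ∀ y : (M.restrict s hs).S,
      (dverify (M.restrict s hs) y φ ↔ dverify M y.1 φ)
  | .atom _, _, _ => Iff.rfl
  | .bot, _, _ => Iff.rfl
  | .snot φ, h, y => dfalsify_restrict hs hA φ h y
  | .and φ ψ, h, y => by
    simp only [formAtoms, Finset.coe_union, Set.union_subset_iff] at h
    exact and_congr (dverify_restrict hs hA φ h.1 y) (dverify_restrict hs hA ψ h.2 y)
  | .or φ ψ, h, y => by
    simp only [formAtoms, Finset.coe_union, Set.union_subset_iff] at h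
    exact or_congr (dverify_restrict hs hA φ h.1 y) (dverify_restrict hs hA ψ h.2 y)
  | .imp φ ψ, h, y => by
    simp only [formAtoms, Finset.coe_union, Set.union_subset_iff] at h
    exact imp_congr (dverify_restrict hs hA φ h.1 y) (dverify_restrict hs hA ψ h.2 y)
  | .box α φ, h, y => by
    simp only [dverify, formAtoms, Finset.coe_union, Set.union_subset_iff] at h ⊢
    rw [forall_restrict_iff hs fun _ hw => hA.progRel_mem α h.1 y.2 hw]
    simp only [progRel_restrict hs hA α h.1, dverify_restrict hs hA φ h.2]
  | .dia α φ, h, y => by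
    simp only [dverify, formAtoms, Finset.coe_union, Set.union_subset_iff] at h ⊢
    rw [exists_restrict_iff hs fun _ hw => hA.progRel_mem α h.1 y.2 hw.1]
    simp only [progRel_restrict hs hA α h.1, dverify_restrict hs hA φ h.2]

theorem dfalsify_restrict (hs : s.Nonempty) (hA : M.IsClosedUnder A s) :
    ∀ (φ : DynForm), (formAtoms φ : Set ℕ) ⊆ A → ∀ y : (M.restrict s hs).S,
      (dfalsify (M.restrict s hs) y φ ↔ dfalsify M y.1 φ)
  | .atom _, _, _ => Iff.rfl
  | .bot, _, _ => Iff.rfl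
  | .snot φ, h, y => dverify_restrict hs hA φ h y
  | .and φ ψ, h, y => by
    simp only [formAtoms, Finset.coe_union, Set.union_subset_iff] at h
    exact or_congr (dfalsify_restrict hs hA φ h.1 y) (dfalsify_restrict hs hA ψ h.2 y)
  | .or φ ψ, h, y => by
    simp only [formAtoms, Finset.coe_union, Set.union_subset_iff] at h
    exact and_congr (dfalsify_restrict hs hA φ h.1 y) (dfalsify_restrict hs hA ψ h.2 y)
  | .imp φ ψ, h, y => by
    simp only [formAtoms, Finset.coe_union, Set.union_subset_iff] at h
    exact and_congr (dverify_restrict hs hA φ h.1 y) (dfalsify_restrict hs hA ψ h.2 y)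
  | .box α φ, h, y => by
    simp only [dfalsify, formAtoms, Finset.coe_union, Set.union_subset_iff] at h ⊢
    rw [exists_restrict_iff hs fun _ hw => hA.progRel_mem α h.1 y.2 hw.1]
    simp only [progRel_restrict hs hA α h.1, dfalsify_restrict hs hA φ h.2]
  | .dia α φ, h, y => by
    simp only [dfalsify, formAtoms, Finset.coe_union, Set.union_subset_iff] at h ⊢
    rw [forall_restrict_iff hs fun _ hw => hA.progRel_mem α h.1 y.2 hw]
    simp only [progRel_restrict hs hA α h.1, dfalsify_restrict hs hA φ h.2]

end

end DynModel

theorem stmt18 (X : List DynForm) (φ : DynForm) (a : ℕ) (rest : List ℕ)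
    (hatoms : ∀ b : ℕ, b ∈ a :: rest ↔ ((∃ ψ ∈ X, b ∈ formAtoms ψ) ∨ b ∈ formAtoms φ)) :
    (∀ M : DynModel, (∀ ψ ∈ X, validIn M ψ) → validIn M φ) ↔
      DynValid (.imp (.box (.star (unionList a rest)) (conjList X)) φ) := by
  constructor
  · intro hglob M x hbox
    let s : Set M.S := {y | progRel M (.star (unionList a rest)) x y}
    have hx : x ∈ s := Relation.ReflTransGen.refl
    have hs : M.IsClosedUnder {b | b ∈ a :: rest} s := fun b hb _ _ hy hr =>
      hy.tail ((progRel_unionList M a rest _ _).2 ⟨b, hb, hr⟩)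
    have hX : ∀ ψ ∈ X, validIn (M.restrict s ⟨x, hx⟩) ψ := fun ψ hψ y =>
      (DynModel.dverify_restrict _ hs ψ (fun b hb => (hatoms b).2 (.inl ⟨ψ, hψ, hb⟩)) y).2
        ((dverify_conjList M y.1 X).1 (hbox y.1 y.2) ψ hψ)
    exact (DynModel.dverify_restrict _ hs φ (fun b hb => (hatoms b).2 (.inr hb)) ⟨x, hx⟩).1
      (hglob _ hX ⟨x, hx⟩)
  · intro hval M hX x
    exact hval M x fun y _ => (dverify_conjList M y X).2 fun ψ hψ => hX ψ hψ y
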